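/- Let A, B be real n×n matrices satisfying: (c1) A is entrywise nonnegative, (c2) B_{ij} ≤ A_{ij} for all i ≠ j, and (c3) there exists an entrywise positive vector u with (B−A)u entrywise positive. Set μ = ρ((B−A)⁻¹A), ρ(A,B) = μ/(1+μ), and let Γ = G(A) ∪ G(B) if ρ(A,B) ≠ 0 and Γ = G(A) if ρ(A,B) = 0. Let J be a class of Γ such that (i) the principal submatrix (ρ(A,B)B − A)_J is singular, and (ii) whenever a class K ≠ J of Γ has access to J in the reduced graph of Γ, the principal submatrix (ρ(A,B)B − A)_K is nonsingular. Then there exists an entrywise nonnegative vector x in the nullspace of ρ(A,B)B − A whose entry x_j is positive exactly when vertex j has access in Γ to some vertex of J (and x_j = 0 otherwise); moreover, any entrywise nonnegative vector in the nullspace of ρ(A,B)B − A with exactly this support is a positive scalar multiple of x. -/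

import Mathlib

open Matrix

/-- Spectral radius of a real matrix: supremum of the absolute values of its
complex eigenvalues. -/
noncomputable def specRad {m : Type*} [Fintype m] [DecidableEq m] (M : Matrix m m ℝ) : ℝ :=
  sSup ((fun z : ℂ => ‖z‖) '' spectrum ℂ (M.map (algebraMap ℝ ℂ)))

/-- Principal submatrix of `A` with rows and columns indexed by `J`. -/
def subm {n : ℕ} (A : Matrix (Fin n) (Fin n) ℝ) (J : Finset (Fin n)) :
    Matrix {i // i ∈ J} {i // i ∈ J} ℝ :=
  A.submatrix Subtype.val Subtype.val

/-- `X` is an M-matrix: `X = q•I − P` with `P ≥ 0` and `q ≥ ρ(P)`. -/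
def IsMMatrix {m : Type*} [Fintype m] [DecidableEq m] (X : Matrix m m ℝ) : Prop :=
  ∃ q : ℝ, ∃ P : Matrix m m ℝ, (∀ i j, 0 ≤ P i j) ∧ X = q • 1 - P ∧ specRad P ≤ q

/-- `X` is a nonsingular M-matrix: `X = q•I − P` with `P ≥ 0` and `q > ρ(P)`. -/
def IsNonsingMMatrix {m : Type*} [Fintype m] [DecidableEq m] (X : Matrix m m ℝ) : Prop :=
  ∃ q : ℝ, ∃ P : Matrix m m ℝ, (∀ i j, 0 ≤ P i j) ∧ X = q • 1 - P ∧ specRad P < q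

/-- Edge relation of the digraph `G(X)` of a matrix `X`: edge `(j,k)` iff
`X_{jk} ≠ 0`. -/
def edgeRel {n : ℕ} (X : Matrix (Fin n) (Fin n) ℝ) (j k : Fin n) : Prop :=
  X j k ≠ 0

/-- `j` has access to `k` in the digraph with edge relation `Γ`:
`j = k` or there is a directed path from `j` to `k`. -/
def Access {n : ℕ} (Γ : Fin n → Fin n → Prop) (j k : Fin n) : Prop :=
  Relation.ReflTransGen Γ j k

/-- `j` and `k` communicate: each has access to the other. -/
def Communicate {n : ℕ} (Γ : Fin n → Fin n → Prop) (j k : Fin n) : Prop :=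
  Access Γ j k ∧ Access Γ k j

/-- `C` is a class of the digraph with edge relation `Γ`: an equivalence class
of the communication relation. -/
def IsClass {n : ℕ} (Γ : Fin n → Fin n → Prop) (C : Finset (Fin n)) : Prop :=
  ∃ v : Fin n, ∀ w, w ∈ C ↔ Communicate Γ v w

/-!
Write `C = ρ(A,B) B - A`. Off the diagonal `C` is nonpositive and its digraph is `Γ`. For
`s ∈ (ρ(A,B), 1]` the matrix `s B - A` is nonsingular, because `s / (1 - s)` exceeds the spectral
radius of `(B - A)⁻¹ A`. The values of `s` for which `s B - A` has a positive vector `w` with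
`(s B - A) w > 0` form a set that is open, and closed in `(ρ(A,B), 1]`: on that interval the set is
cut out by `(s B - A)⁻¹ ≥ 0`. It contains `1` (by (c3)), so it is all of the connected interval.
Restrict these vectors to a class `K`, normalise them and let `s → ρ(A,B)`. This gives
`w ≩ 0` with `C_K w ≥ 0`, and `w > 0` because `C_K` is irreducible. Hence the singular block `C_J`
has a positive null vector that spans its kernel, and every nonsingular block `C_K` has an
entrywise positive inverse. Now take the vertices with access to `J` and remove source classes
from them one at a time. The null vector on what remains extends uniquely to the class `K` just
removed: `x_K = C_K⁻¹ e`, where `e = -(C x)_K ≩ 0` because `K` has an edge into what remains.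
-/

section ZMatrix

variable {ι : Type*}

def IsZMatrix (M : Matrix ι ι ℝ) : Prop :=
  ∀ i j, i ≠ j → M i j ≤ 0

def IsIrreducibleMatrix (M : Matrix ι ι ℝ) : Prop :=
  ∀ i j, Relation.ReflTransGen (fun p q => M p q ≠ 0) i j

lemma exists_smul_le_of_pos [Fintype ι] [Nonempty ι] (z : ι → ℝ) {w : ι → ℝ}
    (hw : ∀ i, 0 < w i) : ∃ c : ℝ, ∃ i₀, c • w ≤ z ∧ z i₀ = c * w i₀ := by
  obtain ⟨i₀, -, hi₀⟩ :=
    Finset.univ.exists_min_image (fun i => z i / w i) Finset.univ_nonempty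
  refine ⟨z i₀ / w i₀, i₀, fun i => ?_, (div_mul_cancel₀ _ (hw i₀).ne').symm⟩
  simpa [le_div_iff₀ (hw i)] using hi₀ i (Finset.mem_univ i)

namespace IsZMatrix

variable {M : Matrix ι ι ℝ} {z w : ι → ℝ} {i : ι}

lemma submatrix (hM : IsZMatrix M) {κ : Type*} {f : κ → ι} (hf : Function.Injective f) :
    IsZMatrix (M.submatrix f f) :=
  fun _ _ hij => hM _ _ (hf.ne hij)

lemma mul_nonpos_of_eq_zero (hM : IsZMatrix M) (hz : 0 ≤ z) (hzi : z i = 0) (j : ι) :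
    M i j * z j ≤ 0 := by
  rcases eq_or_ne i j with rfl | hij
  · simp [hzi]
  · exact mul_nonpos_of_nonpos_of_nonneg (hM i j hij) (hz j)

variable [Fintype ι]

lemma mulVec_apply_nonpos (hM : IsZMatrix M) (hz : 0 ≤ z) (hzi : z i = 0) :
    (M *ᵥ z) i ≤ 0 :=
  Finset.sum_nonpos fun j _ => hM.mul_nonpos_of_eq_zero hz hzi j

lemma pos_of_mulVec_pos (hM : IsZMatrix M) (hz : 0 ≤ z) (hMz : ∀ i, 0 < (M *ᵥ z) i) (i : ι) :
    0 < z i :=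
  (hz i).lt_of_ne' fun hzi => (hMz i).not_ge (hM.mulVec_apply_nonpos hz hzi)

lemma eq_zero_of_mulVec_apply_nonneg (hM : IsZMatrix M) (hz : 0 ≤ z) (hzi : z i = 0)
    (hMz : 0 ≤ (M *ᵥ z) i) {j : ι} (hij : M i j ≠ 0) : z j = 0 := by
  have hsum : ∑ k, M i k * z k = 0 := le_antisymm (hM.mulVec_apply_nonpos hz hzi) hMz
  have := (Finset.sum_eq_zero_iff_of_nonpos fun k _ => hM.mul_nonpos_of_eq_zero hz hzi k).mp
    hsum j (Finset.mem_univ j)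
  exact (mul_eq_zero.mp this).resolve_left hij

lemma nonneg_of_mulVec_nonneg (hM : IsZMatrix M) (hw : ∀ i, 0 < w i)
    (hMw : ∀ i, 0 < (M *ᵥ w) i) (hMz : 0 ≤ M *ᵥ z) : 0 ≤ z := by
  cases isEmpty_or_nonempty ι
  · exact fun i => isEmptyElim i
  obtain ⟨c, i₀, hcz, hi₀⟩ := exists_smul_le_of_pos z hw
  rcases le_or_gt 0 c with hc | hc
  · exact fun i => (mul_nonneg hc (hw i).le).trans (hcz i)
  · have hv := hM.mulVec_apply_nonpos (sub_nonneg.mpr hcz) (i := i₀) (by simp [hi₀])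
    simp only [mulVec_sub, mulVec_smul, Pi.sub_apply, Pi.smul_apply, smul_eq_mul] at hv
    nlinarith [show 0 ≤ (M *ᵥ z) i₀ from hMz i₀, hMw i₀]

lemma eq_zero_of_reflTransGen (hM : IsZMatrix M) (hz : 0 ≤ z) (hMz : 0 ≤ M *ᵥ z) {a b : ι}
    (hab : Relation.ReflTransGen (fun p q => M p q ≠ 0) a b) (ha : z a = 0) : z b = 0 := by
  induction hab with
  | refl => exact ha
  | tail _ hbc ih => exact hM.eq_zero_of_mulVec_apply_nonneg hz ih (hMz _) hbc

lemma pos_of_mulVec_nonneg (hM : IsZMatrix M) (hirr : IsIrreducibleMatrix M) (hz : 0 ≤ z)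
    (hz0 : z ≠ 0) (hMz : 0 ≤ M *ᵥ z) (i : ι) : 0 < z i :=
  (hz i).lt_of_ne' fun hzi =>
    hz0 (funext fun j => hM.eq_zero_of_reflTransGen hz hMz (hirr i j) hzi)

lemma pos_or_eq_smul (hM : IsZMatrix M) (hirr : IsIrreducibleMatrix M) (hw : ∀ i, 0 < w i)
    (hMw : 0 ≤ M *ᵥ w) (hMz : 0 ≤ M *ᵥ z) :
    (∀ i, 0 < z i) ∨ ∃ c : ℝ, c ≤ 0 ∧ z = c • w := by
  cases isEmpty_or_nonempty ι
  · exact Or.inl fun i => isEmptyElim i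
  obtain ⟨c, i₀, hcz, hi₀⟩ := exists_smul_le_of_pos z hw
  rcases lt_or_ge 0 c with hc | hc
  · exact Or.inl fun i => (mul_pos hc (hw i)).trans_le (hcz i)
  refine Or.inr ⟨c, hc, by_contra fun hne => ?_⟩
  have hMv : 0 ≤ M *ᵥ (z - c • w) := by
    intro i
    simp only [mulVec_sub, mulVec_smul, Pi.sub_apply, Pi.smul_apply, smul_eq_mul,
      Pi.zero_apply]
    nlinarith [show 0 ≤ (M *ᵥ z) i from hMz i, show 0 ≤ (M *ᵥ w) i from hMw i]
  have := hM.pos_of_mulVec_nonneg hirr (sub_nonneg.mpr hcz) (sub_ne_zero.mpr hne) hMv i₀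
  simp [hi₀] at this

lemma eq_smul_of_mulVec_eq_zero (hM : IsZMatrix M) (hirr : IsIrreducibleMatrix M)
    (hw : ∀ i, 0 < w i) (hMw : 0 ≤ M *ᵥ w) (hz : M *ᵥ z = 0) : ∃ c : ℝ, z = c • w := by
  rcases hM.pos_or_eq_smul hirr hw hMw hz.ge with hpos | ⟨c, -, rfl⟩
  · rcases hM.pos_or_eq_smul hirr hw hMw (z := -z) (by rw [mulVec_neg, hz, neg_zero])
      with hneg | ⟨c, -, hc⟩
    · cases isEmpty_or_nonempty ι
      · exact ⟨0, Subsingleton.elim _ _⟩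
      · obtain ⟨i⟩ := ‹Nonempty ι›
        exact absurd (hneg i) (by simpa using (hpos i).le)
    · exact ⟨-c, by rw [neg_smul, ← hc, neg_neg]⟩
  · exact ⟨c, rfl⟩

lemma pos_of_mulVec_nonneg_ne_zero (hM : IsZMatrix M) (hirr : IsIrreducibleMatrix M)
    (hw : ∀ i, 0 < w i) (hMw : 0 ≤ M *ᵥ w) (hMz : 0 ≤ M *ᵥ z) (hMz0 : M *ᵥ z ≠ 0) :
    ∀ i, 0 < z i := by
  refine (hM.pos_or_eq_smul hirr hw hMw hMz).resolve_right ?_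
  rintro ⟨c, hc, rfl⟩
  refine hMz0 (le_antisymm (fun i => ?_) hMz)
  simpa [mulVec_smul] using mul_nonpos_of_nonpos_of_nonneg hc (hMw i)

variable [DecidableEq ι]

lemma isUnit_det (hM : IsZMatrix M) (hw : ∀ i, 0 < w i) (hMw : ∀ i, 0 < (M *ᵥ w) i) :
    IsUnit M.det := by
  refine isUnit_iff_ne_zero.mpr fun h => ?_
  obtain ⟨z, hz0, hz⟩ := exists_mulVec_eq_zero_iff.mpr h
  have h₁ := hM.nonneg_of_mulVec_nonneg hw hMw (z := z) hz.ge
  have h₂ := hM.nonneg_of_mulVec_nonneg hw hMw (z := -z) (by rw [mulVec_neg, hz, neg_zero])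
  exact hz0 (le_antisymm (neg_nonneg.mp h₂) h₁)

lemma inv_nonneg (hM : IsZMatrix M) (hw : ∀ i, 0 < w i) (hMw : ∀ i, 0 < (M *ᵥ w) i)
    (i j : ι) : 0 ≤ M⁻¹ i j := by
  have h := hM.nonneg_of_mulVec_nonneg hw hMw (z := M⁻¹ *ᵥ Pi.single j 1) (by
    rw [mulVec_mulVec, mul_nonsing_inv _ (hM.isUnit_det hw hMw), one_mulVec]
    exact Pi.single_nonneg.mpr zero_le_one)
  simpa using h i

theorem exists_pos_mulVec_pos_iff (hM : IsZMatrix M) (hdet : IsUnit M.det) :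
    (∃ w, (∀ i, 0 < w i) ∧ ∀ i, 0 < (M *ᵥ w) i) ↔ ∀ i j, 0 ≤ M⁻¹ i j := by
  refine ⟨fun ⟨w, hw, hMw⟩ => hM.inv_nonneg hw hMw, fun hinv => ?_⟩
  have hMw : ∀ i, 0 < (M *ᵥ (M⁻¹ *ᵥ 1)) i := by
    simp [mulVec_mulVec, mul_nonsing_inv _ hdet]
  exact ⟨_, hM.pos_of_mulVec_pos (fun i => Finset.sum_nonneg fun j _ => by simpa using hinv i j)
    hMw, hMw⟩

lemma mulVec_eq_zero_of_det_eq_zero (hM : IsZMatrix M) (hirr : IsIrreducibleMatrix M)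
    (hw : ∀ i, 0 < w i) (hMw : 0 ≤ M *ᵥ w) (hdet : M.det = 0) : M *ᵥ w = 0 := by
  obtain ⟨z, hz0, hz⟩ := exists_mulVec_eq_zero_iff.mpr hdet
  obtain ⟨c, rfl⟩ := hM.eq_smul_of_mulVec_eq_zero hirr hw hMw hz
  rw [mulVec_smul] at hz
  exact (smul_eq_zero.mp hz).resolve_left (by rintro rfl; simp at hz0)

lemma inv_pos (hM : IsZMatrix M) (hirr : IsIrreducibleMatrix M) (hw : ∀ i, 0 < w i)
    (hMw : 0 ≤ M *ᵥ w) (hdet : IsUnit M.det) (i j : ι) : 0 < M⁻¹ i j := by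
  have hMz : M *ᵥ (M⁻¹ *ᵥ Pi.single j 1) = Pi.single j 1 := by
    rw [mulVec_mulVec, mul_nonsing_inv _ hdet, one_mulVec]
  have h := hM.pos_of_mulVec_nonneg_ne_zero hirr hw hMw (z := M⁻¹ *ᵥ Pi.single j 1)
    (by rw [hMz]; exact Pi.single_nonneg.mpr zero_le_one) (by rw [hMz]; simp) i
  simpa using h

end IsZMatrix

end ZMatrix

lemma mulVec_pos_of_pos {ι : Type*} [Fintype ι] {N : Matrix ι ι ℝ} (hN : ∀ i j, 0 < N i j)
    {e : ι → ℝ} (he : 0 ≤ e) (he0 : e ≠ 0) (i : ι) : 0 < (N *ᵥ e) i := by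
  obtain ⟨k, hk⟩ := Function.ne_iff.mp he0
  exact Finset.sum_pos' (fun j _ => mul_nonneg (hN i j).le (he j))
    ⟨k, Finset.mem_univ k, mul_pos (hN i k) ((he k).lt_of_ne' hk)⟩

section Blocks

variable {n : ℕ} {M : Matrix (Fin n) (Fin n) ℝ}

lemma mulVec_apply_eq_subm_mulVec_add (M : Matrix (Fin n) (Fin n) ℝ) (K : Finset (Fin n))
    (x : Fin n → ℝ) {i : Fin n} (hi : i ∈ K) :
    (M *ᵥ x) i = (subm M K *ᵥ fun j => x j) ⟨i, hi⟩ + ∑ j ∈ Kᶜ, M i j * x j := by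
  rw [mulVec, dotProduct, ← Finset.sum_add_sum_compl K, ← Finset.sum_coe_sort K]
  rfl

lemma mulVec_apply_eq_subm_mulVec_add_mul {K : Finset (Fin n)} {x y : Fin n → ℝ} {c : ℝ}
    (hx : ∀ j ∈ K, x j = 0) (hy : ∀ j ∉ K, y j = c * x j) {i : Fin n} (hi : i ∈ K) :
    (M *ᵥ y) i = (subm M K *ᵥ fun j => y j) ⟨i, hi⟩ + c * (M *ᵥ x) i := by
  have hxK : (fun j : K => x j) = 0 := funext fun j => hx j j.2
  rw [mulVec_apply_eq_subm_mulVec_add M K y hi, mulVec_apply_eq_subm_mulVec_add M K x hi, hxK,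
    mulVec_zero, Pi.zero_apply, zero_add, Finset.mul_sum]
  congr 1
  exact Finset.sum_congr rfl fun j hj => by rw [hy j (Finset.mem_compl.mp hj)]; ring

lemma mulVec_apply_eq_of_eq_off {K : Finset (Fin n)} {i : Fin n} (hK : ∀ j ∈ K, M i j = 0)
    {y y' : Fin n → ℝ} (hyy' : ∀ j ∉ K, y j = y' j) : (M *ᵥ y) i = (M *ᵥ y') i :=
  show ∑ j, M i j * y j = ∑ j, M i j * y' j from Finset.sum_congr rfl fun j _ => by
    by_cases hj : j ∈ K
    · rw [hK j hj, zero_mul, zero_mul]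
    · rw [hyy' j hj]

lemma IsZMatrix.mulVec_apply_le_subm_mulVec (hM : IsZMatrix M) {x : Fin n → ℝ} (hx : 0 ≤ x)
    {K : Finset (Fin n)} {i : Fin n} (hi : i ∈ K) :
    (M *ᵥ x) i ≤ (subm M K *ᵥ fun j => x j) ⟨i, hi⟩ := by
  rw [mulVec_apply_eq_subm_mulVec_add M K x hi, add_le_iff_nonpos_right]
  refine Finset.sum_nonpos fun j hj => mul_nonpos_of_nonpos_of_nonneg (hM i j ?_) (hx j)
  rintro rfl
  exact Finset.mem_compl.mp hj hi

def IsNullVectorOn (M : Matrix (Fin n) (Fin n) ℝ) (T : Finset (Fin n)) (x : Fin n → ℝ) :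
    Prop :=
  0 ≤ x ∧ (∀ j, 0 < x j ↔ j ∈ T) ∧ ∀ i ∈ T, (M *ᵥ x) i = 0

def HasUniqueNullVectorOn (M : Matrix (Fin n) (Fin n) ℝ) (T : Finset (Fin n)) : Prop :=
  ∃ x, IsNullVectorOn M T x ∧ ∀ y, IsNullVectorOn M T y → ∃ c : ℝ, 0 < c ∧ y = c • x

namespace IsNullVectorOn

variable {T : Finset (Fin n)} {x : Fin n → ℝ}

lemma eq_zero (hx : IsNullVectorOn M T x) {j : Fin n} (hj : j ∉ T) : x j = 0 :=
  ((hx.1 j).lt_or_eq.resolve_left (mt (hx.2.1 j).mp hj)).symm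

lemma mulVec_eq_zero (hx : IsNullVectorOn M T x) (hT : ∀ i ∉ T, ∀ j ∈ T, M i j = 0) :
    M *ᵥ x = 0 := by
  funext i
  by_cases hi : i ∈ T
  · exact hx.2.2 i hi
  · exact (mulVec_apply_eq_of_eq_off (hT i hi) (y' := 0) fun j => hx.eq_zero).trans
      (by simp)

lemma restrict {K : Finset (Fin n)} (hx : IsNullVectorOn M (T ∪ K) x) (hTK : Disjoint T K)
    (hKT : ∀ i ∈ T, ∀ j ∈ K, M i j = 0) :
    IsNullVectorOn M T fun j => if j ∈ K then 0 else x j := by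
  refine ⟨fun j => ?_, fun j => ?_, fun i hi => ?_⟩
  · by_cases h : j ∈ K
    · simp [h]
    · simpa [h] using hx.1 j
  · by_cases h : j ∈ K
    · simp [h, Finset.disjoint_right.mp hTK h]
    · simp [h, hx.2.1 j]
  · rw [← hx.2.2 i (Finset.mem_union_left K hi)]
    exact mulVec_apply_eq_of_eq_off (hKT i hi) fun j hj => if_neg hj

end IsNullVectorOn

theorem hasUniqueNullVectorOn_of_ker {K : Finset (Fin n)} (hK : K.Nonempty) {w : K → ℝ}
    (hw : ∀ i, 0 < w i) (hMw : subm M K *ᵥ w = 0)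
    (hker : ∀ z, subm M K *ᵥ z = 0 → ∃ c : ℝ, z = c • w) : HasUniqueNullVectorOn M K := by
  set x : Fin n → ℝ := fun j => if h : j ∈ K then w ⟨j, h⟩ else 0
  have hrow : ∀ y : Fin n → ℝ, (∀ j ∉ K, y j = 0) → ∀ i (hi : i ∈ K),
      (M *ᵥ y) i = (subm M K *ᵥ fun j => y j) ⟨i, hi⟩ := fun y hy i hi => by
    rw [mulVec_apply_eq_subm_mulVec_add M K y hi, add_eq_left]
    exact Finset.sum_eq_zero fun j hj => by rw [hy j (Finset.mem_compl.mp hj), mul_zero]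
  have hxK : (fun j : K => x j) = w := funext fun j => dif_pos j.2
  refine ⟨x, ⟨fun j => ?_, fun j => ?_, fun i hi => ?_⟩, fun y hy => ?_⟩
  · by_cases h : j ∈ K
    · simpa [x, h] using (hw _).le
    · simp [x, h]
  · by_cases h : j ∈ K
    · simpa [x, h] using hw _
    · simp [x, h]
  · rw [hrow x (fun j hj => dif_neg hj) i hi, hxK, hMw, Pi.zero_apply]
  · obtain ⟨c, hc⟩ := hker (fun j => y j) (funext fun i => by
      rw [← hrow y (fun j => hy.eq_zero) i i.2, hy.2.2 i i.2, Pi.zero_apply])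
    obtain ⟨k, hk⟩ := hK
    have hck : y k = c * w ⟨k, hk⟩ := congrFun hc ⟨k, hk⟩
    refine ⟨c, pos_of_mul_pos_left (hck ▸ (hy.2.1 k).mpr hk) (hw _).le, funext fun j => ?_⟩
    by_cases h : j ∈ K
    · simpa [x, h] using congrFun hc ⟨j, h⟩
    · simp [x, h, hy.eq_zero h]

theorem HasUniqueNullVectorOn.union (hM : IsZMatrix M) {T K : Finset (Fin n)}
    (hT : HasUniqueNullVectorOn M T) (hTK : Disjoint T K)
    (hKT : ∀ i ∈ T, ∀ j ∈ K, M i j = 0) (hedge : ∃ p ∈ K, ∃ q ∈ T, M p q ≠ 0)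
    (hKdet : IsUnit (subm M K).det) (hKinv : ∀ i j, 0 < (subm M K)⁻¹ i j) :
    HasUniqueNullVectorOn M (T ∪ K) := by
  obtain ⟨x', hx', huniq'⟩ := hT
  have hx'K : ∀ j ∈ K, x' j = 0 := fun j hj => hx'.eq_zero (Finset.disjoint_right.mp hTK hj)
  set e : K → ℝ := fun i => -(M *ᵥ x') i
  have he : 0 ≤ e := fun i => neg_nonneg.mpr (hM.mulVec_apply_nonpos hx'.1 (hx'K _ i.2))
  have he0 : e ≠ 0 := fun h => by
    obtain ⟨p, hp, q, hq, hpq⟩ := hedge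
    refine ((hx'.2.1 q).mpr hq).ne' (hM.eq_zero_of_mulVec_apply_nonneg hx'.1 (hx'K p hp) ?_ hpq)
    simpa [e] using (congrFun h ⟨p, hp⟩).le
  set ξ := (subm M K)⁻¹ *ᵥ e
  have hξ : subm M K *ᵥ ξ = e := by rw [mulVec_mulVec, mul_nonsing_inv _ hKdet, one_mulVec]
  set x : Fin n → ℝ := fun j => if h : j ∈ K then ξ ⟨j, h⟩ else x' j
  have hxK : (fun j : K => x j) = ξ := funext fun j => dif_pos j.2
  have hx_off : ∀ j ∉ K, x j = 1 * x' j := fun j hj => (dif_neg hj).trans (one_mul _).symm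
  refine ⟨x, ⟨fun j => ?_, fun j => ?_, fun i hi => ?_⟩, fun y hy => ?_⟩
  · by_cases h : j ∈ K
    · simpa [x, h] using (mulVec_pos_of_pos hKinv he he0 _).le
    · simpa [x, h] using hx'.1 j
  · by_cases h : j ∈ K
    · simpa [x, h] using mulVec_pos_of_pos hKinv he he0 _
    · simp [x, h, hx'.2.1 j]
  · rcases Finset.mem_union.mp hi with hi | hi
    · rw [mulVec_apply_eq_of_eq_off (hKT i hi) fun j hj => (hx_off j hj).trans (one_mul _),
        hx'.2.2 i hi]
    · rw [mulVec_apply_eq_subm_mulVec_add_mul hx'K hx_off hi, hxK, hξ]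
      simp [e]
  · obtain ⟨c, hc, hcy'⟩ := huniq' _ (hy.restrict hTK hKT)
    have hy_off : ∀ j ∉ K, y j = c * x' j := fun j hj => by
      simpa [hj] using congrFun hcy' j
    have hyK : (fun j : K => y j) = c • ξ := by
      refine mulVec_injective_iff_isUnit.mpr ((isUnit_iff_isUnit_det _).mpr hKdet)
        (funext fun i => ?_)
      have := mulVec_apply_eq_subm_mulVec_add_mul (M := M) hx'K hy_off i.2
      rw [hy.2.2 i (Finset.mem_union_right T i.2)] at this
      rw [mulVec_smul, hξ, Pi.smul_apply, smul_eq_mul]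
      simp only [e]
      linarith
    refine ⟨c, hc, funext fun j => ?_⟩
    by_cases h : j ∈ K
    · simpa [x, h] using congrFun hyK ⟨j, h⟩
    · simp [x, h, hy_off j h]

end Blocks

lemma Relation.ReflTransGen.exists_exit {α : Type*} {r : α → α → Prop} {K : Set α} {a c : α}
    (h : Relation.ReflTransGen r a c) (ha : a ∈ K) (hc : c ∉ K) :
    ∃ p ∈ K, ∃ q ∉ K, r p q ∧ Relation.ReflTransGen r q c := by
  induction h using Relation.ReflTransGen.head_induction_on with
  | refl => exact absurd ha hc
  | @head a b hab hbc ih =>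
    by_cases hb : b ∈ K
    · exact ih hb
    · exact ⟨a, ha, b, hb, hab, hbc⟩

section Digraph

variable {n : ℕ} {Γ : Fin n → Fin n → Prop}

lemma communicate_equivalence : Equivalence (Communicate Γ) where
  refl _ := ⟨Relation.ReflTransGen.refl, Relation.ReflTransGen.refl⟩
  symm h := ⟨h.2, h.1⟩
  trans h₁ h₂ := ⟨h₁.1.trans h₂.1, h₂.2.trans h₁.2⟩

lemma exists_source (U : Finset (Fin n)) (hU : U.Nonempty) :
    ∃ v ∈ U, ∀ w ∈ U, Access Γ w v → Access Γ v w := by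
  obtain ⟨v, hvU, hmin⟩ := U.exists_minimalFor (fun v => {w | Access Γ w v}) hU
  exact ⟨v, hvU, fun w hw hwv =>
    hmin hw (fun x hx => Relation.ReflTransGen.trans hx hwv) Relation.ReflTransGen.refl⟩

namespace IsClass

variable {K : Finset (Fin n)}

lemma mem_iff (hK : IsClass Γ K) {a : Fin n} (ha : a ∈ K) (c : Fin n) :
    c ∈ K ↔ Communicate Γ a c := by
  obtain ⟨v, hv⟩ := hK
  have hva := (hv a).mp ha
  rw [hv]
  exact ⟨communicate_equivalence.trans (communicate_equivalence.symm hva),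
    communicate_equivalence.trans hva⟩

lemma nonempty (hK : IsClass Γ K) : K.Nonempty :=
  let ⟨v, hv⟩ := hK
  ⟨v, (hv v).mpr (communicate_equivalence.refl v)⟩

variable {M : Matrix (Fin n) (Fin n) ℝ}

lemma isIrreducibleMatrix_subm (hΓ : ∀ i j, i ≠ j → (Γ i j ↔ M i j ≠ 0)) (hK : IsClass Γ K) :
    IsIrreducibleMatrix (subm M K) := by
  suffices h : ∀ a b, Access Γ a b → ∀ (ha : a ∈ K) (hb : b ∈ K),
      Relation.ReflTransGen (fun p q => subm M K p q ≠ 0) ⟨a, ha⟩ ⟨b, hb⟩ from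
    fun a b => h a b ((hK.mem_iff a.2 b).mp b.2).1 a.2 b.2
  intro a b hab
  induction hab using Relation.ReflTransGen.head_induction_on with
  | refl => exact fun _ _ => Relation.ReflTransGen.refl
  | @head a c hac hcb ih =>
    intro ha hb
    have hc : c ∈ K := (hK.mem_iff ha c).mpr
      ⟨Relation.ReflTransGen.single hac, hcb.trans ((hK.mem_iff ha b).mp hb).2⟩
    rcases eq_or_ne a c with rfl | hne
    · exact ih hc hb
    · exact Relation.ReflTransGen.head
        (show subm M K ⟨a, ha⟩ ⟨c, hc⟩ ≠ 0 from (hΓ a c hne).mp hac) (ih hc hb)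

lemma exists_pos_supersolution (hΓ : ∀ i j, i ≠ j → (Γ i j ↔ M i j ≠ 0)) (hM : IsZMatrix M)
    (hK : IsClass Γ K) (hcert : ∃ w : K → ℝ, 0 ≤ w ∧ w ≠ 0 ∧ 0 ≤ subm M K *ᵥ w) :
    ∃ w : K → ℝ, (∀ i, 0 < w i) ∧ 0 ≤ subm M K *ᵥ w :=
  let ⟨w, hw, hw0, hMw⟩ := hcert
  ⟨w, (hM.submatrix Subtype.val_injective).pos_of_mulVec_nonneg
    (hK.isIrreducibleMatrix_subm hΓ) hw hw0 hMw, hMw⟩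

lemma hasUniqueNullVectorOn_of_not_isUnit (hΓ : ∀ i j, i ≠ j → (Γ i j ↔ M i j ≠ 0))
    (hM : IsZMatrix M) (hK : IsClass Γ K)
    (hcert : ∃ w : K → ℝ, 0 ≤ w ∧ w ≠ 0 ∧ 0 ≤ subm M K *ᵥ w)
    (hdet : ¬ IsUnit (subm M K).det) : HasUniqueNullVectorOn M K := by
  obtain ⟨w, hw, hMw⟩ := hK.exists_pos_supersolution hΓ hM hcert
  have hZ : IsZMatrix (subm M K) := hM.submatrix Subtype.val_injective
  have hirr := hK.isIrreducibleMatrix_subm hΓ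
  exact hasUniqueNullVectorOn_of_ker hK.nonempty hw
    (hZ.mulVec_eq_zero_of_det_eq_zero hirr hw hMw (by simpa using hdet))
    fun z hz => hZ.eq_smul_of_mulVec_eq_zero hirr hw hMw hz

lemma inv_subm_pos (hΓ : ∀ i j, i ≠ j → (Γ i j ↔ M i j ≠ 0)) (hM : IsZMatrix M)
    (hK : IsClass Γ K) (hcert : ∃ w : K → ℝ, 0 ≤ w ∧ w ≠ 0 ∧ 0 ≤ subm M K *ᵥ w)
    (hdet : IsUnit (subm M K).det) (i j : K) : 0 < (subm M K)⁻¹ i j :=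
  let ⟨_, hw, hMw⟩ := hK.exists_pos_supersolution hΓ hM hcert
  (hM.submatrix Subtype.val_injective).inv_pos (hK.isIrreducibleMatrix_subm hΓ) hw hMw hdet i j

end IsClass

variable {J T : Finset (Fin n)}

lemma exists_source_class (hJ : IsClass Γ J) (hJT : J ⊆ T) (hTJ : ∀ i ∈ T, ∃ v ∈ J, Access Γ i v)
    (hTclosed : ∀ i ∈ T, ∀ j, Access Γ i j → (∃ v ∈ J, Access Γ j v) → j ∈ T) (hTeq : T ≠ J) :
    ∃ K, IsClass Γ K ∧ K ⊆ T ∧ Disjoint J K ∧ (∃ k ∈ K, ∃ u ∈ J, Access Γ k u) ∧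
      ∀ i ∈ T, ∀ k ∈ K, Access Γ i k → i ∈ K := by
  classical
  obtain ⟨v, hv, hsrc⟩ :=
    exists_source (T \ J) (Finset.sdiff_nonempty.mpr fun h => hTeq (h.antisymm hJT))
  obtain ⟨hvT, hvJ⟩ := Finset.mem_sdiff.mp hv
  obtain ⟨u, huJ, hvu⟩ := hTJ v hvT
  have hmemK : ∀ c, c ∈ Finset.univ.filter (Communicate Γ v) ↔ Communicate Γ v c :=
    fun c => Finset.mem_filter_univ c
  refine ⟨_, ⟨v, hmemK⟩, fun c hc => ?_, Finset.disjoint_left.mpr fun j hjJ hjK => ?_,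
    ⟨v, (hmemK v).mpr (communicate_equivalence.refl v), u, huJ, hvu⟩, fun i hi k hk hik => ?_⟩
  · exact hTclosed v hvT c ((hmemK c).mp hc).1 ⟨u, huJ, ((hmemK c).mp hc).2.trans hvu⟩
  · exact hvJ ((hJ.mem_iff hjJ v).mpr (communicate_equivalence.symm ((hmemK j).mp hjK)))
  · have hiv : Access Γ i v := hik.trans ((hmemK k).mp hk).2
    refine (hmemK i).mpr ⟨?_, hiv⟩
    by_cases hiJ : i ∈ J
    · exact hvu.trans ((hJ.mem_iff huJ i).mp hiJ).1
    · exact hsrc i (Finset.mem_sdiff.mpr ⟨hi, hiJ⟩) hiv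

variable {M : Matrix (Fin n) (Fin n) ℝ}

theorem hasUniqueNullVectorOn_of_closed (hM : IsZMatrix M)
    (hΓ : ∀ i j, i ≠ j → (Γ i j ↔ M i j ≠ 0)) (hJ : IsClass Γ J)
    (hJnull : HasUniqueNullVectorOn M J)
    (hK : ∀ K, IsClass Γ K → K ≠ J → (∃ k ∈ K, ∃ v ∈ J, Access Γ k v) →
      IsUnit (subm M K).det ∧ ∀ i j, 0 < (subm M K)⁻¹ i j)
    (hJT : J ⊆ T) (hTJ : ∀ i ∈ T, ∃ v ∈ J, Access Γ i v)
    (hTclosed : ∀ i ∈ T, ∀ j, Access Γ i j → (∃ v ∈ J, Access Γ j v) → j ∈ T) :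
    HasUniqueNullVectorOn M T := by
  induction T using Finset.strongInduction with
  | H T ih =>
  by_cases hTeq : T = J
  · exact hTeq ▸ hJnull
  obtain ⟨K, hKclass, hKT, hJK, ⟨k, hk, u, hu, hku⟩, hup⟩ :=
    exists_source_class hJ hJT hTJ hTclosed hTeq
  have hT' : HasUniqueNullVectorOn M (T \ K) := by
    refine ih _ (Finset.sdiff_ssubset hKT ⟨k, hk⟩)
      (fun j hj => Finset.mem_sdiff.mpr ⟨hJT hj, Finset.disjoint_left.mp hJK hj⟩)
      (fun i hi => hTJ i (Finset.mem_sdiff.mp hi).1) fun i hi j hij hj => ?_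
    obtain ⟨hiT, hiK⟩ := Finset.mem_sdiff.mp hi
    exact Finset.mem_sdiff.mpr ⟨hTclosed i hiT j hij hj, fun hjK => hiK (hup i hiT j hjK hij)⟩
  have hno : ∀ i ∈ T \ K, ∀ j ∈ K, M i j = 0 := fun i hi j hj => by_contra fun hij => by
    obtain ⟨hiT, hiK⟩ := Finset.mem_sdiff.mp hi
    exact hiK (hup i hiT j hj (Relation.ReflTransGen.single
      ((hΓ i j fun h => hiK (h ▸ hj)).mpr hij)))
  have hedge : ∃ p ∈ K, ∃ q ∈ T \ K, M p q ≠ 0 := by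
    obtain ⟨p, hp, q, hq, hpq, hqu⟩ :=
      Relation.ReflTransGen.exists_exit (K := (K : Set (Fin n))) hku hk
        (Finset.disjoint_left.mp hJK hu)
    refine ⟨p, hp, q, Finset.mem_sdiff.mpr ⟨?_, hq⟩, (hΓ p q fun h => hq (h ▸ hp)).mp hpq⟩
    exact hTclosed p (hKT hp) q (Relation.ReflTransGen.single hpq) ⟨u, hu, hqu⟩
  obtain ⟨hKdet, hKinv⟩ :=
    hK K hKclass (fun h => Finset.disjoint_left.mp hJK (h ▸ hk) hk) ⟨k, hk, u, hu, hku⟩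
  exact Finset.sdiff_union_of_subset hKT ▸
    hT'.union hM Finset.sdiff_disjoint hno hedge hKdet hKinv

theorem exists_nullVector_of_singular_class (hM : IsZMatrix M)
    (hΓ : ∀ i j, i ≠ j → (Γ i j ↔ M i j ≠ 0))
    (hcert : ∀ K, IsClass Γ K → ∃ w : K → ℝ, 0 ≤ w ∧ w ≠ 0 ∧ 0 ≤ subm M K *ᵥ w)
    (hJ : IsClass Γ J) (hJsing : ¬ IsUnit (subm M J).det)
    (hdist : ∀ K : Finset (Fin n), IsClass Γ K → K ≠ J →
      (∃ k ∈ K, ∃ v ∈ J, Access Γ k v) → IsUnit (subm M K).det) :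
    ∃ x : Fin n → ℝ, (∀ j, 0 ≤ x j) ∧ M *ᵥ x = 0 ∧
      (∀ j, (0 < x j ↔ ∃ v ∈ J, Access Γ j v)) ∧
      ∀ y : Fin n → ℝ, (∀ j, 0 ≤ y j) → M *ᵥ y = 0 →
        (∀ j, (0 < y j ↔ ∃ v ∈ J, Access Γ j v)) → ∃ c : ℝ, 0 < c ∧ y = c • x := by
  classical
  set S := Finset.univ.filter fun j => ∃ v ∈ J, Access Γ j v
  have hmemS : ∀ j, j ∈ S ↔ ∃ v ∈ J, Access Γ j v := fun j => Finset.mem_filter_univ j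
  have hS : ∀ i ∉ S, ∀ j ∈ S, M i j = 0 := fun i hi j hj => by_contra fun hij => by
    obtain ⟨v, hv, hjv⟩ := (hmemS j).mp hj
    exact hi ((hmemS i).mpr ⟨v, hv, (Relation.ReflTransGen.single
      ((hΓ i j fun h => hi (h ▸ hj)).mpr hij)).trans hjv⟩)
  obtain ⟨x, hx, huniq⟩ := hasUniqueNullVectorOn_of_closed hM hΓ hJ
    (hJ.hasUniqueNullVectorOn_of_not_isUnit hΓ hM (hcert J hJ) hJsing)
    (fun K hK hKJ hKJacc => have hdet := hdist K hK hKJ hKJacc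
      ⟨hdet, hK.inv_subm_pos hΓ hM (hcert K hK) hdet⟩)
    (fun j hj => (hmemS j).mpr ⟨j, hj, Relation.ReflTransGen.refl⟩)
    (fun i hi => (hmemS i).mp hi) fun _ _ j _ hj => (hmemS j).mpr hj
  exact ⟨x, hx.1, hx.mulVec_eq_zero hS, fun j => (hx.2.1 j).trans (hmemS j),
    fun y hy0 hy hsupp => huniq y ⟨hy0, fun j => (hsupp j).trans (hmemS j).symm,
      fun i _ => congrFun hy i⟩⟩

end Digraph

section Pencil

variable {ι : Type*} {A B : Matrix ι ι ℝ}

lemma isZMatrix_smul_sub (hA : ∀ i j, 0 ≤ A i j) (hBA : ∀ i j, i ≠ j → B i j ≤ A i j) {s : ℝ}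
    (hs0 : 0 ≤ s) (hs1 : s ≤ 1) : IsZMatrix (s • B - A) := fun i j hij => by
  simp only [Matrix.sub_apply, Matrix.smul_apply, smul_eq_mul]
  nlinarith [hA i j, hBA i j hij]

lemma smul_sub_apply_ne_zero_iff (hA : ∀ i j, 0 ≤ A i j) (hBA : ∀ i j, i ≠ j → B i j ≤ A i j)
    {s : ℝ} (hs0 : 0 < s) (hs1 : s < 1) {i j : ι} (hij : i ≠ j) :
    (s • B - A) i j ≠ 0 ↔ A i j ≠ 0 ∨ B i j ≠ 0 := by
  simp only [Matrix.sub_apply, Matrix.smul_apply, smul_eq_mul]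
  refine ⟨fun h => not_and_or.mp fun h' => h (by rw [h'.1, h'.2, mul_zero, sub_zero]),
    fun h => (?_ : s * B i j - A i j < 0).ne⟩
  rcases (hA i j).lt_or_eq with hA0 | hA0
  · nlinarith [hBA i j hij]
  · have hB : B i j < 0 := (hA0 ▸ hBA i j hij).lt_of_ne (h.resolve_left fun h' => h' hA0.symm)
    nlinarith

variable [Fintype ι]

lemma isOpen_setOf_exists_pos_mulVec_pos {X : Type*} [TopologicalSpace X]
    {F : X → Matrix ι ι ℝ} (hF : Continuous F) :
    IsOpen {x | ∃ w : ι → ℝ, (∀ i, 0 < w i) ∧ ∀ i, 0 < (F x *ᵥ w) i} := by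
  have : {x | ∃ w : ι → ℝ, (∀ i, 0 < w i) ∧ ∀ i, 0 < (F x *ᵥ w) i} =
      ⋃ w : ι → ℝ, {_x | ∀ i, 0 < w i} ∩ ⋂ i, {x | 0 < (F x *ᵥ w) i} := by
    ext x
    simp
  rw [this]
  exact isOpen_iUnion fun w => isOpen_const.inter
    (isOpen_iInter_of_finite fun i => isOpen_lt continuous_const (by fun_prop))

lemma isClosed_setOf_exists_mem_stdSimplex_mulVec_nonneg :
    IsClosed {M : Matrix ι ι ℝ | ∃ v ∈ stdSimplex ℝ ι, 0 ≤ M *ᵥ v} := by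
  have : {M : Matrix ι ι ℝ | ∃ v ∈ stdSimplex ℝ ι, 0 ≤ M *ᵥ v} =
      Prod.fst '' {p : Matrix ι ι ℝ × stdSimplex ℝ ι | 0 ≤ p.1 *ᵥ p.2.1} := by
    ext M
    simp
  rw [this]
  exact isClosedMap_fst_of_compactSpace _ (isClosed_le continuous_const (by fun_prop))

variable [DecidableEq ι]

lemma specRad_nonneg (N : Matrix ι ι ℝ) : 0 ≤ specRad N :=
  Real.sSup_nonneg fun _ ⟨z, _, hz⟩ => hz ▸ norm_nonneg z

lemma isUnit_det_smul_one_sub_of_specRad_lt {N : Matrix ι ι ℝ} {t : ℝ} (ht : specRad N < t) :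
    IsUnit (t • (1 : Matrix ι ι ℝ) - N).det := by
  by_contra h
  have hmap : (t • (1 : Matrix ι ι ℝ) - N).map (algebraMap ℝ ℂ) =
      algebraMap ℂ (Matrix ι ι ℂ) t - N.map (algebraMap ℝ ℂ) := by
    ext i j
    by_cases hij : i = j <;> simp [Matrix.algebraMap_matrix_apply, hij]
  have hdet : ((t • (1 : Matrix ι ι ℝ) - N).map (algebraMap ℝ ℂ)).det =
      algebraMap ℝ ℂ (t • (1 : Matrix ι ι ℝ) - N).det :=
    (RingHom.map_det _ _).symm
  have hmem : (t : ℂ) ∈ spectrum ℂ (N.map (algebraMap ℝ ℂ)) := by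
    rw [spectrum.mem_iff, ← hmap, isUnit_iff_isUnit_det, hdet, isUnit_iff_ne_zero,
      map_ne_zero, ← isUnit_iff_ne_zero]
    exact h
  have hle : ‖(t : ℂ)‖ ≤ specRad N :=
    le_csSup ((Matrix.finite_spectrum _).image _).bddAbove ⟨_, hmem, rfl⟩
  rw [Complex.norm_real, Real.norm_eq_abs] at hle
  linarith [le_abs_self t]

noncomputable def pencilRadius (A B : Matrix ι ι ℝ) : ℝ :=
  specRad ((B - A)⁻¹ * A) / (1 + specRad ((B - A)⁻¹ * A))

lemma pencilRadius_nonneg (A B : Matrix ι ι ℝ) : 0 ≤ pencilRadius A B :=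
  div_nonneg (specRad_nonneg _) (by linarith [specRad_nonneg ((B - A)⁻¹ * A)])

lemma pencilRadius_lt_one (A B : Matrix ι ι ℝ) : pencilRadius A B < 1 :=
  (div_lt_one (by linarith [specRad_nonneg ((B - A)⁻¹ * A)])).mpr (by linarith)

lemma isUnit_det_smul_sub (hdet : IsUnit (B - A).det) {s : ℝ} (hs : pencilRadius A B < s)
    (hs1 : s ≤ 1) : IsUnit (s • B - A).det := by
  rcases hs1.eq_or_lt with rfl | hs1
  · simpa using hdet
  set N := (B - A)⁻¹ * A
  have h1s : 0 < 1 - s := sub_pos.mpr hs1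
  have hN : specRad N < s / (1 - s) := by
    have := specRad_nonneg N
    rw [lt_div_iff₀ h1s]
    rw [pencilRadius, div_lt_iff₀ (by linarith)] at hs
    linarith
  -- `s B - A = s (B - A) - (1 - s) A` and `A = (B - A) N`
  have hfac : s • B - A = (1 - s) • ((B - A) * ((s / (1 - s)) • 1 - N)) := by
    rw [mul_sub, ← mul_assoc, mul_nonsing_inv _ hdet, one_mul, Matrix.mul_smul, mul_one, smul_sub,
      smul_smul, mul_div_cancel₀ _ h1s.ne']
    module
  rw [hfac, det_smul, det_mul]
  exact ((isUnit_iff_ne_zero.mpr h1s.ne').pow _).mul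
    (hdet.mul (isUnit_det_smul_one_sub_of_specRad_lt hN))

theorem exists_pos_mulVec_pos_smul_sub (hA : ∀ i j, 0 ≤ A i j)
    (hBA : ∀ i j, i ≠ j → B i j ≤ A i j)
    (hu : ∃ u : ι → ℝ, (∀ i, 0 < u i) ∧ ∀ i, 0 < ((B - A) *ᵥ u) i) {s : ℝ}
    (hs : s ∈ Set.Ioc (pencilRadius A B) 1) :
    ∃ w : ι → ℝ, (∀ i, 0 < w i) ∧ ∀ i, 0 < ((s • B - A) *ᵥ w) i := by
  obtain ⟨u, hu, hBAu⟩ := hu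
  set X := Set.Ioc (pencilRadius A B) 1
  have hZ : ∀ s ∈ X, IsZMatrix (s • B - A) := fun s hs =>
    isZMatrix_smul_sub hA hBA ((pencilRadius_nonneg A B).trans hs.1.le) hs.2
  have hdet : ∀ s ∈ X, IsUnit (s • B - A).det := fun s hs =>
    isUnit_det_smul_sub ((by simpa using hZ 1 ⟨pencilRadius_lt_one A B, le_rfl⟩ :
      IsZMatrix (B - A)).isUnit_det hu hBAu) hs.1 hs.2
  have : PreconnectedSpace X := Subtype.preconnectedSpace isPreconnected_Ioc
  set U : Set X := {s | ∃ w : ι → ℝ, (∀ i, 0 < w i) ∧ ∀ i, 0 < ((s.1 • B - A) *ᵥ w) i}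
  have hU_open : IsOpen U := isOpen_setOf_exists_pos_mulVec_pos (by fun_prop)
  -- on `X` the certificate set is also cut out by `(s B - A)⁻¹ ≥ 0`, a closed condition
  have hU_closed : IsClosed U := by
    have : U = ⋂ i, ⋂ j, {s : X | 0 ≤ (s.1 • B - A)⁻¹ i j} := by
      ext s
      simp only [U, Set.mem_ofPred_eq, Set.mem_iInter]
      exact (hZ s.1 s.2).exists_pos_mulVec_pos_iff (hdet s.1 s.2)
    have hcont : Continuous fun s : X => (s.1 • B - A)⁻¹ :=
      continuous_iff_continuousAt.mpr fun s =>
        (continuousAt_matrix_inv _ (by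
          rw [Ring.inverse_eq_inv']
          exact continuousAt_inv₀ (hdet s.1 s.2).ne_zero)).comp
        (by fun_prop : Continuous fun s : X => s.1 • B - A).continuousAt
    rw [this]
    exact isClosed_iInter fun i => isClosed_iInter fun j =>
      isClosed_le continuous_const (hcont.matrix_elem i j)
  have h1 : (⟨1, pencilRadius_lt_one A B, le_rfl⟩ : X) ∈ U := ⟨u, hu, by simpa using hBAu⟩
  have hsU : (⟨s, hs⟩ : X) ∈ U := IsClopen.eq_univ ⟨hU_closed, hU_open⟩ ⟨_, h1⟩ ▸ Set.mem_univ _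
  exact hsU

end Pencil

lemma exists_subm_supersolution_pencilRadius {n : ℕ} {A B : Matrix (Fin n) (Fin n) ℝ}
    (hA : ∀ i j, 0 ≤ A i j) (hBA : ∀ i j, i ≠ j → B i j ≤ A i j)
    (hu : ∃ u : Fin n → ℝ, (∀ i, 0 < u i) ∧ ∀ i, 0 < ((B - A) *ᵥ u) i)
    {K : Finset (Fin n)} (hK : K.Nonempty) :
    ∃ w : K → ℝ, 0 ≤ w ∧ w ≠ 0 ∧ 0 ≤ subm (pencilRadius A B • B - A) K *ᵥ w := by
  have : Nonempty K := hK.to_subtype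
  set P := {s : ℝ | ∃ v ∈ stdSimplex ℝ K, 0 ≤ subm (s • B - A) K *ᵥ v}
  have hP : IsClosed P :=
    isClosed_setOf_exists_mem_stdSimplex_mulVec_nonneg.preimage (by unfold subm; fun_prop)
  have hIoc : Set.Ioc (pencilRadius A B) 1 ⊆ P := by
    intro s hs
    obtain ⟨w, hw, hMw⟩ := exists_pos_mulVec_pos_smul_sub hA hBA hu hs
    have hZ := isZMatrix_smul_sub hA hBA ((pencilRadius_nonneg A B).trans hs.1.le) hs.2
    have hsum : 0 < ∑ j : K, w j := Finset.sum_pos (fun j _ => hw j) Finset.univ_nonempty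
    refine ⟨(∑ j : K, w j)⁻¹ • fun j : K => w j, ⟨fun j => ?_, ?_⟩, fun i => ?_⟩
    · exact mul_nonneg (inv_nonneg.mpr hsum.le) (hw j).le
    · simp only [Pi.smul_apply, smul_eq_mul, ← Finset.mul_sum, inv_mul_cancel₀ hsum.ne']
    · rw [mulVec_smul]
      exact mul_nonneg (inv_nonneg.mpr hsum.le)
        ((hMw i).le.trans (hZ.mulVec_apply_le_subm_mulVec (fun j => (hw j).le) i.2))
  have hρ : pencilRadius A B ∈ P := hP.closure_subset_iff.mpr hIoc (by
    rw [closure_Ioc (pencilRadius_lt_one A B).ne]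
    exact ⟨le_rfl, (pencilRadius_lt_one A B).le⟩)
  obtain ⟨v, hv, hMv⟩ := hρ
  exact ⟨v, hv.1, fun h => by simpa [h] using hv.2, hMv⟩

/-- Existence and combinatorial structure of a nonnegative null vector of
`ρ(A,B)B − A` associated with a distinguished singular class `J` of `Γ`:
`x_j > 0` exactly when `j` has access in `Γ` to a vertex of `J`, and any
nonnegative null vector with exactly this support is a positive multiple
of `x`. -/
theorem stmt_12 {n : ℕ} (A B : Matrix (Fin n) (Fin n) ℝ)
    (hc1 : ∀ i j, 0 ≤ A i j)
    (hc2 : ∀ i j, i ≠ j → B i j ≤ A i j)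
    (hc3 : ∃ u : Fin n → ℝ, (∀ i, 0 < u i) ∧ ∀ i, 0 < (B - A).mulVec u i)
    (μ ρAB : ℝ) (hμ : μ = specRad ((B - A)⁻¹ * A)) (hρ : ρAB = μ / (1 + μ))
    (Γ : Fin n → Fin n → Prop)
    (hΓ : Γ = if ρAB ≠ 0 then (fun j k => A j k ≠ 0 ∨ B j k ≠ 0)
              else (fun j k => A j k ≠ 0))
    (J : Finset (Fin n)) (hJclass : IsClass Γ J)
    (hJsing : ¬ IsUnit (subm (ρAB • B - A) J).det)
    (hdist : ∀ K : Finset (Fin n), IsClass Γ K → K ≠ J →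
      (∃ k ∈ K, ∃ v ∈ J, Access Γ k v) →
      IsUnit (subm (ρAB • B - A) K).det) :
    ∃ x : Fin n → ℝ, (∀ j, 0 ≤ x j) ∧ (ρAB • B - A).mulVec x = 0 ∧
      (∀ j, (0 < x j ↔ ∃ v ∈ J, Access Γ j v)) ∧
      ∀ y : Fin n → ℝ, (∀ j, 0 ≤ y j) → (ρAB • B - A).mulVec y = 0 →
        (∀ j, (0 < y j ↔ ∃ v ∈ J, Access Γ j v)) →
        ∃ c : ℝ, 0 < c ∧ y = c • x := by
  have hρAB : ρAB = pencilRadius A B := by rw [hρ, hμ]; rfl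
  have hρ0 : 0 ≤ ρAB := hρAB ▸ pencilRadius_nonneg A B
  have hρ1 : ρAB < 1 := hρAB ▸ pencilRadius_lt_one A B
  refine exists_nullVector_of_singular_class (isZMatrix_smul_sub hc1 hc2 hρ0 hρ1.le)
    (fun i j hij => ?_)
    (fun K hK => hρAB ▸ exists_subm_supersolution_pencilRadius hc1 hc2 hc3 hK.nonempty)
    hJclass hJsing hdist
  subst hΓ
  by_cases h0 : ρAB = 0
  · simp [h0]
  · simp only [ne_eq, h0, not_false_eq_true, if_true]
    exact (smul_sub_apply_ne_zero_iff hc1 hc2 (hρ0.lt_of_ne' h0) hρ1 hij).symm
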